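/- Let S be a semigroup that is the union of its n minimal left ideals, where 3 ≤ n < ∞. Then the metric dimension of the intersection ideal graph Γ(S) equals 2 if n = 3, and equals n if n ≥ 4. -/

import Mathlib

/-- `I` is a left ideal of the semigroup `S`: a nonempty subset closed under
left multiplication by arbitrary elements of `S`. -/
def IsLeftIdeal (S : Type*) [Semigroup S] (I : Set S) : Prop :=
  I.Nonempty ∧ ∀ s : S, ∀ x ∈ I, s * x ∈ I

/-- `I` is a nontrivial left ideal of `S`: a left ideal with `I ≠ S`. -/
def IsNontrivialLeftIdeal (S : Type*) [Semigroup S] (I : Set S) : Prop :=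
  IsLeftIdeal S I ∧ I ≠ Set.univ

/-- `I` is a minimal left ideal of `S`: a nontrivial left ideal properly
containing no left ideal of `S`. -/
def IsMinimalLeftIdeal (S : Type*) [Semigroup S] (I : Set S) : Prop :=
  IsNontrivialLeftIdeal S I ∧ ∀ J : Set S, IsLeftIdeal S J → ¬ J ⊂ I

/-- `I` is a maximal left ideal of `S`: a nontrivial left ideal not properly
contained in any nontrivial left ideal of `S`. -/
def IsMaximalLeftIdeal (S : Type*) [Semigroup S] (I : Set S) : Prop :=
  IsNontrivialLeftIdeal S I ∧ ∀ J : Set S, IsNontrivialLeftIdeal S J → ¬ I ⊂ J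

/-- The intersection ideal graph `Γ(S)`: vertices are the nontrivial left ideals of `S`,
two distinct vertices being adjacent iff their intersection is nonempty. -/
def idealGraph (S : Type*) [Semigroup S] :
    SimpleGraph {I : Set S // IsNontrivialLeftIdeal S I} where
  Adj I J := I ≠ J ∧ (I.1 ∩ J.1).Nonempty
  symm := by
    constructor
    rintro I J ⟨h1, h2⟩
    exact ⟨h1.symm, by rwa [Set.inter_comm]⟩
  loopless := by constructor; rintro I ⟨h1, -⟩; exact h1 rfl

/-- A resolving set of `Γ(S)`: every pair of distinct vertices is resolved by some
vertex of the set. -/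
def IsResolvingSet (S : Type*) [Semigroup S]
    (R : Set {I : Set S // IsNontrivialLeftIdeal S I}) : Prop :=
  ∀ x y : {I : Set S // IsNontrivialLeftIdeal S I}, x ≠ y →
    ∃ z ∈ R, (idealGraph S).dist x z ≠ (idealGraph S).dist y z

/-- The metric dimension of `Γ(S)`: the minimum cardinality of a resolving set. -/
noncomputable def metricDim (S : Type*) [Semigroup S] : ℕ∞ :=
  sInf {k : ℕ∞ | ∃ R : Set {I : Set S // IsNontrivialLeftIdeal S I},
    IsResolvingSet S R ∧ R.encard = k}

/-!
Since `S` is the disjoint union of its minimal left ideals, a nontrivial left ideal is the union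
of the minimal ones it contains, and two distinct vertices are at distance `1` when they meet and
`2` when they do not (they are joined through `Cᶜ` for a third minimal ideal `C`). So `z`
resolves `x ≠ y` iff it is one of them or meets exactly one of them. Hence the minimal ideals
resolve the graph, and for `n = 3` two of them suffice, while a single vertex cannot separate the
three minimal ideals from each other.

For `n ≥ 4`, the complements `Mᶜ, M'ᶜ` of two minimal ideals are resolved only by `M`, `Mᶜ`,
`M'`, `M'ᶜ`. A resolving set with fewer than `n` elements therefore consists, for all minimal
ideals `M` but one `M₀`, of exactly one of `M, Mᶜ`. Then either `M₀` and `M₀ ∪ b` (if some `bᶜ`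
is present) or `J ∪ K` and `J ∪ K ∪ M₀` (if only minimal ideals are present) are not resolved.
-/

open Set

namespace Set

variable {α β : Type*}

theorem exists_mem_notMem_of_encard_lt_encard {s t : Set α} (h : t.encard < s.encard) :
    ∃ x ∈ s, x ∉ t := by
  by_contra! H
  exact (encard_le_encard H).not_gt h

theorem exists_mem_ne_ne_of_two_lt_encard {s : Set α} (h : 2 < s.encard) (a b : α) :
    ∃ c ∈ s, c ≠ a ∧ c ≠ b := by
  have hle : ({a, b} : Set α).encard ≤ 2 := by
    grw [encard_insert_le, encard_singleton]; rfl
  obtain ⟨c, hc, hcab⟩ := exists_mem_notMem_of_encard_lt_encard (hle.trans_lt h)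
  simp only [mem_insert_iff, mem_singleton_iff, not_or] at hcab
  exact ⟨c, hc, hcab⟩

theorem exists_mem_ne_ne_ne_of_three_lt_encard {s : Set α} (h : 3 < s.encard) (a b c : α) :
    ∃ d ∈ s, d ≠ a ∧ d ≠ b ∧ d ≠ c := by
  have hle : ({a, b, c} : Set α).encard ≤ 3 := by
    grw [encard_insert_le, encard_insert_le, encard_singleton]; rfl
  obtain ⟨d, hd, hdabc⟩ := exists_mem_notMem_of_encard_lt_encard (hle.trans_lt h)
  simp only [mem_insert_iff, mem_singleton_iff, not_or] at hdabc
  exact ⟨d, hd, hdabc⟩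

theorem exists_image_eq_diff_singleton_of_encard_lt {f : α → β} {s : Set β} {R : Set α}
    (hcov : ∀ a ∈ s, ∀ b ∈ s, a ≠ b → a ∈ f '' R ∨ b ∈ f '' R) (hlt : R.encard < s.encard) :
    ∃ b ∈ s, f '' R = s \ {b} ∧ InjOn f R := by
  obtain ⟨b, hbs, hbR⟩ := exists_mem_notMem_of_encard_lt_encard ((encard_image_le f R).trans_lt hlt)
  have hsub : s \ {b} ⊆ f '' R := fun a ⟨has, hab⟩ => (hcov a has b hbs hab).resolve_right hbR
  have hle : (s \ {b}).encard ≤ (f '' R).encard := encard_le_encard hsub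
  have himage : (f '' R).encard ≤ R.encard := encard_image_le f R
  have hRfin : R.Finite := encard_ne_top_iff.1 hlt.ne_top
  have hR : R.encard ≤ (s \ {b}).encard := by
    rw [← encard_sdiff_singleton_add_one hbs] at hlt
    exact (ENat.lt_add_one_iff (ne_top_of_le_ne_top hlt.ne_top (hle.trans himage))).1 hlt
  refine ⟨b, hbs, ?_, hRfin.injOn_of_encard_image_eq (himage.antisymm (hR.trans hle))⟩
  exact ((hRfin.image f).subset hsub |>.eq_of_subset_of_encard_le hsub (himage.trans hR)).symm

end Set

section

variable {S : Type*} [Semigroup S]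

theorem IsLeftIdeal.union {I J : Set S} (hI : IsLeftIdeal S I) (hJ : IsLeftIdeal S J) :
    IsLeftIdeal S (I ∪ J) :=
  ⟨hI.1.mono subset_union_left, fun s x hx => hx.imp (hI.2 s x) (hJ.2 s x)⟩

namespace IsMinimalLeftIdeal

variable {M M' I J : Set S}

theorem nonempty (hM : IsMinimalLeftIdeal S M) : M.Nonempty := hM.1.1.1

theorem subset_of_inter_nonempty (hM : IsMinimalLeftIdeal S M) (hI : IsLeftIdeal S I)
    (h : (I ∩ M).Nonempty) : M ⊆ I := by
  have hIM : IsLeftIdeal S (I ∩ M) := ⟨h, fun s x hx => ⟨hI.2 s x hx.1, hM.1.1.2 s x hx.2⟩⟩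
  have : I ∩ M = M := by
    by_contra hne
    exact hM.2 _ hIM (ssubset_iff_subset_ne.2 ⟨inter_subset_right, hne⟩)
  exact this ▸ inter_subset_left

theorem inter_nonempty_iff (hM : IsMinimalLeftIdeal S M) (hI : IsLeftIdeal S I) :
    (I ∩ M).Nonempty ↔ M ⊆ I :=
  ⟨hM.subset_of_inter_nonempty hI, fun h => by rw [inter_eq_right.2 h]; exact hM.nonempty⟩

theorem eq_of_subset (hM : IsMinimalLeftIdeal S M) (hM' : IsMinimalLeftIdeal S M')
    (h : M ⊆ M') : M = M' :=
  h.antisymm (hM'.subset_of_inter_nonempty hM.1.1 (by rw [inter_eq_left.2 h]; exact hM.nonempty))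

theorem disjoint (hM : IsMinimalLeftIdeal S M) (hM' : IsMinimalLeftIdeal S M') (hne : M ≠ M') :
    Disjoint M M' := by
  rw [disjoint_iff_inter_eq_empty, ← not_nonempty_iff_eq_empty]
  exact fun h => hne (hM'.eq_of_subset hM (hM'.subset_of_inter_nonempty hM.1.1 h)).symm

theorem subset_iff_eq (hM : IsMinimalLeftIdeal S M) (hM' : IsMinimalLeftIdeal S M') :
    M ⊆ M' ↔ M = M' :=
  ⟨hM.eq_of_subset hM', fun h => h.le⟩

theorem subset_union_iff (hM : IsMinimalLeftIdeal S M) (hI : IsLeftIdeal S I)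
    (hJ : IsLeftIdeal S J) : M ⊆ I ∪ J ↔ M ⊆ I ∨ M ⊆ J := by
  refine ⟨fun h => ?_, fun h => h.elim (·.trans subset_union_left) (·.trans subset_union_right)⟩
  obtain ⟨m, hm⟩ := hM.nonempty
  exact (h hm).imp (fun hmI => hM.subset_of_inter_nonempty hI ⟨m, hmI, hm⟩)
    (fun hmJ => hM.subset_of_inter_nonempty hJ ⟨m, hmJ, hm⟩)

theorem inter_compl_nonempty_iff (hM : IsMinimalLeftIdeal S M) (hI : IsLeftIdeal S I) :
    (I ∩ Mᶜ).Nonempty ↔ I ≠ M := by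
  rw [← sdiff_eq, sdiff_nonempty]
  exact ⟨fun h hIM => h hIM.le, fun h hIM => h (hIM.antisymm
    (hM.subset_of_inter_nonempty hI (by rw [inter_eq_left.2 hIM]; exact hI.1)))⟩

theorem isNontrivialLeftIdeal_compl (hM : IsMinimalLeftIdeal S M)
    (hu : ⋃₀ {I : Set S | IsMinimalLeftIdeal S I} = univ)
    (hM' : IsMinimalLeftIdeal S M') (hne : M' ≠ M) : IsNontrivialLeftIdeal S Mᶜ := by
  refine ⟨⟨hM'.nonempty.mono (hM'.disjoint hM hne).subset_compl_right, fun s x hx => ?_⟩,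
    fun h => hM.nonempty.ne_empty (compl_univ_iff.1 h)⟩
  obtain ⟨K, hK, hxK⟩ := hu.symm ▸ mem_univ x
  have hKM : K ≠ M := by rintro rfl; exact hx hxK
  exact (hK.disjoint hM hKM).subset_compl_right (hK.1.1.2 s x hxK)

theorem compl_not_isMinimalLeftIdeal (hM : IsMinimalLeftIdeal S M)
    {M₁ M₂ : Set S} (hM₁ : IsMinimalLeftIdeal S M₁) (hM₂ : IsMinimalLeftIdeal S M₂)
    (h₁ : M₁ ≠ M) (h₂ : M₂ ≠ M) (h₁₂ : M₁ ≠ M₂) : ¬ IsMinimalLeftIdeal S Mᶜ := fun hMc =>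
  h₁₂ ((hM₁.eq_of_subset hMc (hM₁.disjoint hM h₁).subset_compl_right).trans
    (hM₂.eq_of_subset hMc (hM₂.disjoint hM h₂).subset_compl_right).symm)

end IsMinimalLeftIdeal

theorem IsLeftIdeal.isNontrivialLeftIdeal_union {I J M : Set S} (hI : IsLeftIdeal S I)
    (hJ : IsLeftIdeal S J) (hM : IsMinimalLeftIdeal S M) (hMI : ¬ M ⊆ I) (hMJ : ¬ M ⊆ J) :
    IsNontrivialLeftIdeal S (I ∪ J) :=
  ⟨hI.union hJ, fun h => ((hM.subset_union_iff hI hJ).1 (h ▸ subset_univ M)).elim hMI hMJ⟩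

theorem exists_isMinimalLeftIdeal_subset (hu : ⋃₀ {I : Set S | IsMinimalLeftIdeal S I} = univ)
    {I : Set S} (hI : IsLeftIdeal S I) : ∃ M, IsMinimalLeftIdeal S M ∧ M ⊆ I := by
  obtain ⟨x, hx⟩ := hI.1
  obtain ⟨M, hM, hxM⟩ := hu.symm ▸ mem_univ x
  exact ⟨M, hM, hM.subset_of_inter_nonempty hI ⟨x, hx, hxM⟩⟩

theorem exists_isMinimalLeftIdeal_not_subset
    (hu : ⋃₀ {I : Set S | IsMinimalLeftIdeal S I} = univ)
    {I : Set S} (hI : IsNontrivialLeftIdeal S I) : ∃ M, IsMinimalLeftIdeal S M ∧ ¬ M ⊆ I := by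
  obtain ⟨x, hx⟩ := (ne_univ_iff_exists_notMem I).1 hI.2
  obtain ⟨M, hM, hxM⟩ := hu.symm ▸ mem_univ x
  exact ⟨M, hM, fun h => hx (h hxM)⟩

theorem IsLeftIdeal.eq_of_forall_isMinimalLeftIdeal_subset_iff
    (hu : ⋃₀ {I : Set S | IsMinimalLeftIdeal S I} = univ) {I J : Set S}
    (hI : IsLeftIdeal S I) (hJ : IsLeftIdeal S J)
    (h : ∀ M, IsMinimalLeftIdeal S M → (M ⊆ I ↔ M ⊆ J)) : I = J := by
  have key : ∀ {I J : Set S}, IsLeftIdeal S I →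
      (∀ M, IsMinimalLeftIdeal S M → M ⊆ I → M ⊆ J) → I ⊆ J := fun hI h x hx => by
    obtain ⟨M, hM, hxM⟩ := hu.symm ▸ mem_univ x
    exact h M hM (hM.subset_of_inter_nonempty hI ⟨x, hx, hxM⟩) hxM
  exact (key hI fun M hM => (h M hM).1).antisymm (key hJ fun M hM => (h M hM).2)

abbrev NontrivialLeftIdeal (S : Type*) [Semigroup S] := {I : Set S // IsNontrivialLeftIdeal S I}

theorem idealGraph_dist_eq_two (hu : ⋃₀ {I : Set S | IsMinimalLeftIdeal S I} = univ)
    (h3 : 2 < {I : Set S | IsMinimalLeftIdeal S I}.encard) {x z : NontrivialLeftIdeal S}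
    (hxz : x ≠ z) (hdisj : ¬ (x.1 ∩ z.1).Nonempty) : (idealGraph S).dist x z = 2 := by
  obtain ⟨M, hM, hMx⟩ := exists_isMinimalLeftIdeal_subset hu x.2.1
  obtain ⟨K, hK, hKz⟩ := exists_isMinimalLeftIdeal_subset hu z.2.1
  obtain ⟨C, hC, hCM, hCK⟩ := exists_mem_ne_ne_of_two_lt_encard h3 M K
  -- `x` and `z` are joined through `Cᶜ`, which contains both `M` and `K`.
  let w : NontrivialLeftIdeal S := ⟨Cᶜ, hC.isNontrivialLeftIdeal_compl hu hM hCM.symm⟩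
  have hxw : (x.1 ∩ w.1).Nonempty :=
    hM.nonempty.mono (subset_inter hMx (hM.disjoint hC hCM.symm).subset_compl_right)
  have hwz : (w.1 ∩ z.1).Nonempty :=
    hK.nonempty.mono (subset_inter (hK.disjoint hC hCK.symm).subset_compl_right hKz)
  have hxw' : (idealGraph S).Adj x w := ⟨by rintro rfl; exact hdisj (inter_comm _ _ ▸ hwz), hxw⟩
  have hwz' : (idealGraph S).Adj w z := ⟨by rintro rfl; exact hdisj hxw, hwz⟩
  let p : (idealGraph S).Walk x z := .cons hxw' hwz'.toWalk
  have hle : (idealGraph S).dist x z ≤ 2 := SimpleGraph.dist_le p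
  have hpos : 0 < (idealGraph S).dist x z := SimpleGraph.Reachable.pos_dist_of_ne ⟨p⟩ hxz
  have hne : (idealGraph S).dist x z ≠ 1 := fun h => hdisj (SimpleGraph.dist_eq_one_iff_adj.1 h).2
  omega

open scoped Classical in
theorem idealGraph_dist_eq (hu : ⋃₀ {I : Set S | IsMinimalLeftIdeal S I} = univ)
    (h3 : 2 < {I : Set S | IsMinimalLeftIdeal S I}.encard) (x z : NontrivialLeftIdeal S) :
    (idealGraph S).dist x z = if x = z then 0 else if (x.1 ∩ z.1).Nonempty then 1 else 2 := by
  split_ifs with hxz hmeet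
  · rw [hxz, SimpleGraph.dist_self]
  · exact SimpleGraph.dist_eq_one_iff_adj.2 ⟨hxz, hmeet⟩
  · exact idealGraph_dist_eq_two hu h3 hxz hmeet

theorem idealGraph_dist_ne_dist_iff (hu : ⋃₀ {I : Set S | IsMinimalLeftIdeal S I} = univ)
    (h3 : 2 < {I : Set S | IsMinimalLeftIdeal S I}.encard) {x y : NontrivialLeftIdeal S}
    (hxy : x ≠ y) (z : NontrivialLeftIdeal S) :
    (idealGraph S).dist x z ≠ (idealGraph S).dist y z ↔
      z = x ∨ z = y ∨ ¬ ((x.1 ∩ z.1).Nonempty ↔ (y.1 ∩ z.1).Nonempty) := by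
  rw [idealGraph_dist_eq hu h3, idealGraph_dist_eq hu h3]
  split_ifs <;> simp_all [eq_comm]

theorem NontrivialLeftIdeal.exists_isMinimalLeftIdeal_not_subset_iff_of_ne
    (hu : ⋃₀ {I : Set S | IsMinimalLeftIdeal S I} = univ) {x y : NontrivialLeftIdeal S}
    (hxy : x ≠ y) : ∃ M, IsMinimalLeftIdeal S M ∧ ¬ (M ⊆ x.1 ↔ M ⊆ y.1) := by
  by_contra! h
  exact hxy (Subtype.ext (x.2.1.eq_of_forall_isMinimalLeftIdeal_subset_iff hu y.2.1 h))

theorem isResolvingSet_setOf_isMinimalLeftIdeal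
    (hu : ⋃₀ {I : Set S | IsMinimalLeftIdeal S I} = univ)
    (h3 : 2 < {I : Set S | IsMinimalLeftIdeal S I}.encard) :
    IsResolvingSet S {v | IsMinimalLeftIdeal S v.1} := by
  intro x y hxy
  obtain ⟨M, hM, hMxy⟩ := NontrivialLeftIdeal.exists_isMinimalLeftIdeal_not_subset_iff_of_ne hu hxy
  refine ⟨⟨M, hM.1⟩, hM, (idealGraph_dist_ne_dist_iff hu h3 hxy _).2 (.inr (.inr ?_))⟩
  rwa [hM.inter_nonempty_iff x.2.1, hM.inter_nonempty_iff y.2.1]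

theorem encard_setOf_isMinimalLeftIdeal_val :
    {v : NontrivialLeftIdeal S | IsMinimalLeftIdeal S v.1}.encard =
      {I : Set S | IsMinimalLeftIdeal S I}.encard := by
  have himage : Subtype.val '' {v : NontrivialLeftIdeal S | IsMinimalLeftIdeal S v.1} =
      {I : Set S | IsMinimalLeftIdeal S I} :=
    Set.ext fun I => ⟨fun ⟨_, hv, hvI⟩ => hvI ▸ hv, fun hI => ⟨⟨I, hI.1⟩, hI, rfl⟩⟩
  rw [← himage, Subtype.val_injective.encard_image]

theorem IsResolvingSet.two_le_encard (hu : ⋃₀ {I : Set S | IsMinimalLeftIdeal S I} = univ)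
    (h3 : 2 < {I : Set S | IsMinimalLeftIdeal S I}.encard)
    {R : Set (NontrivialLeftIdeal S)} (hR : IsResolvingSet S R) : 2 ≤ R.encard := by
  by_contra! hlt
  have hsub : R.Subsingleton := encard_le_one_iff_subsingleton.1 (Order.le_of_lt_add_one hlt)
  obtain ⟨t, hts, ht⟩ := exists_subset_encard_eq (Order.add_one_le_of_lt h3)
  obtain ⟨M₁, M₂, M₃, h₁₂, h₁₃, h₂₃, rfl⟩ := encard_eq_three.1 ht
  have hM₁ : IsMinimalLeftIdeal S M₁ := hts (by simp)
  have hM₂ : IsMinimalLeftIdeal S M₂ := hts (by simp)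
  have hM₃ : IsMinimalLeftIdeal S M₃ := hts (by simp)
  -- Resolving two minimal ideals means containing exactly one of them, and no vertex
  -- contains exactly one of each of the three pairs among `M₁, M₂, M₃`.
  have hsep : ∀ {M M' : Set S} (hM : IsMinimalLeftIdeal S M) (hM' : IsMinimalLeftIdeal S M'),
      M ≠ M' → ∃ z ∈ R, ¬ (M ⊆ z.1 ↔ M' ⊆ z.1) := fun {M M'} hM hM' hne => by
    have hvne : (⟨M, hM.1⟩ : NontrivialLeftIdeal S) ≠ ⟨M', hM'.1⟩ :=
      fun h => hne (congrArg Subtype.val h)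
    obtain ⟨z, hzR, hz⟩ := hR _ _ hvne
    refine ⟨z, hzR, ?_⟩
    rw [idealGraph_dist_ne_dist_iff hu h3 hvne z, inter_comm, hM.inter_nonempty_iff z.2.1,
      inter_comm, hM'.inter_nonempty_iff z.2.1] at hz
    rcases hz with rfl | rfl | hz
    · exact fun h => hne (hM'.eq_of_subset hM (h.1 subset_rfl)).symm
    · exact fun h => hne (hM.eq_of_subset hM' (h.2 subset_rfl))
    · exact hz
  obtain ⟨z, hz, h₁₂⟩ := hsep hM₁ hM₂ h₁₂
  obtain ⟨z', hz', h₁₃⟩ := hsep hM₁ hM₃ h₁₃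
  obtain ⟨z'', hz'', h₂₃⟩ := hsep hM₂ hM₃ h₂₃
  rw [hsub hz' hz] at h₁₃
  rw [hsub hz'' hz] at h₂₃
  tauto

theorem isResolvingSet_pair (hu : ⋃₀ {I : Set S | IsMinimalLeftIdeal S I} = univ)
    {M₁ M₂ M₃ : Set S} (hmin : {I : Set S | IsMinimalLeftIdeal S I} = {M₁, M₂, M₃})
    (h₁₂ : M₁ ≠ M₂) (h₁₃ : M₁ ≠ M₃) (h₂₃ : M₂ ≠ M₃)
    (hM₁ : IsMinimalLeftIdeal S M₁) (hM₂ : IsMinimalLeftIdeal S M₂) :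
    IsResolvingSet S {⟨M₁, hM₁.1⟩, ⟨M₂, hM₂.1⟩} := by
  have h3 : 2 < {I : Set S | IsMinimalLeftIdeal S I}.encard := by
    rw [hmin, encard_eq_three.2 ⟨_, _, _, h₁₂, h₁₃, h₂₃, rfl⟩]
    norm_num
  have hM₃ : IsMinimalLeftIdeal S M₃ := show M₃ ∈ {I : Set S | IsMinimalLeftIdeal S I} by
    simp [hmin]
  have hcases : ∀ M, IsMinimalLeftIdeal S M → M = M₁ ∨ M = M₂ ∨ M = M₃ := fun M hM => by
    simpa [hmin] using (show M ∈ {I : Set S | IsMinimalLeftIdeal S I} from hM)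
  have hext : ∀ {I J : Set S}, IsLeftIdeal S I → IsLeftIdeal S J → (M₁ ⊆ I ↔ M₁ ⊆ J) →
      (M₂ ⊆ I ↔ M₂ ⊆ J) → (M₃ ⊆ I ↔ M₃ ⊆ J) → I = J := fun hI hJ e₁ e₂ e₃ =>
    hI.eq_of_forall_isMinimalLeftIdeal_subset_iff hu hJ fun M hM => by
      rcases hcases M hM with rfl | rfl | rfl <;> assumption
  have hsome : ∀ w : NontrivialLeftIdeal S, M₁ ⊆ w.1 ∨ M₂ ⊆ w.1 ∨ M₃ ⊆ w.1 := fun w => by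
    obtain ⟨M, hM, hMw⟩ := exists_isMinimalLeftIdeal_subset hu w.2.1
    rcases hcases M hM with rfl | rfl | rfl <;> simp [hMw]
  have hnotall : ∀ w : NontrivialLeftIdeal S, ¬ (M₁ ⊆ w.1 ∧ M₂ ⊆ w.1 ∧ M₃ ⊆ w.1) := fun w => by
    obtain ⟨M, hM, hMw⟩ := exists_isMinimalLeftIdeal_not_subset hu w.2
    rcases hcases M hM with rfl | rfl | rfl <;> tauto
  have hv₁ : ∀ w : NontrivialLeftIdeal S, M₁ ⊆ w.1 → ¬ M₂ ⊆ w.1 → ¬ M₃ ⊆ w.1 →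
      ⟨M₁, hM₁.1⟩ = w := fun w e₁ e₂ e₃ => Subtype.ext <| hext hM₁.1.1 w.2.1
    (iff_of_true subset_rfl e₁) (iff_of_false (mt (hM₂.subset_iff_eq hM₁).1 h₁₂.symm) e₂)
    (iff_of_false (mt (hM₃.subset_iff_eq hM₁).1 h₁₃.symm) e₃)
  have hv₂ : ∀ w : NontrivialLeftIdeal S, ¬ M₁ ⊆ w.1 → M₂ ⊆ w.1 → ¬ M₃ ⊆ w.1 →
      ⟨M₂, hM₂.1⟩ = w := fun w e₁ e₂ e₃ => Subtype.ext <| hext hM₂.1.1 w.2.1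
    (iff_of_false (mt (hM₁.subset_iff_eq hM₂).1 h₁₂) e₁) (iff_of_true subset_rfl e₂)
    (iff_of_false (mt (hM₃.subset_iff_eq hM₂).1 h₂₃.symm) e₃)
  intro x y hxy
  by_contra! hres
  have hres₁ := mt (idealGraph_dist_ne_dist_iff hu h3 hxy _).2 (not_not.2 (hres _ (.inl rfl)))
  have hres₂ := mt (idealGraph_dist_ne_dist_iff hu h3 hxy _).2 (not_not.2 (hres _ (.inr rfl)))
  simp only [hM₁.inter_nonempty_iff x.2.1, hM₁.inter_nonempty_iff y.2.1,
    hM₂.inter_nonempty_iff x.2.1, hM₂.inter_nonempty_iff y.2.1, not_or, not_not] at hres₁ hres₂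
  obtain ⟨hx₁, hy₁, e₁⟩ := hres₁
  obtain ⟨hx₂, hy₂, e₂⟩ := hres₂
  have e₃ : ¬ (M₃ ⊆ x.1 ↔ M₃ ⊆ y.1) :=
    fun e₃ => hxy (Subtype.ext (hext x.2.1 y.2.1 e₁ e₂ e₃))
  by_cases a₁ : M₁ ⊆ x.1 <;> by_cases a₂ : M₂ ⊆ x.1
  · exact e₃ (iff_of_false (fun a₃ => hnotall x ⟨a₁, a₂, a₃⟩)
      (fun b₃ => hnotall y ⟨e₁.1 a₁, e₂.1 a₂, b₃⟩))
  · exact e₃ (iff_of_true (not_not.1 fun a₃ => hx₁ (hv₁ x a₁ a₂ a₃))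
      (not_not.1 fun b₃ => hy₁ (hv₁ y (e₁.1 a₁) (mt e₂.2 a₂) b₃)))
  · exact e₃ (iff_of_true (not_not.1 fun a₃ => hx₂ (hv₂ x a₁ a₂ a₃))
      (not_not.1 fun b₃ => hy₂ (hv₂ y (mt e₁.2 a₁) (e₂.1 a₂) b₃)))
  · exact e₃ (iff_of_true (((hsome x).resolve_left a₁).resolve_left a₂)
      (((hsome y).resolve_left (mt e₁.2 a₁)).resolve_left (mt e₂.2 a₂)))

open scoped Classical in
/-- The vertices separating `Mᶜ` from `M'ᶜ` (for minimal `M ≠ M'`) are `M, Mᶜ, M', M'ᶜ`; this map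
indexes them by `M` and `M'`. -/
noncomputable def minimalOrCompl (I : Set S) : Set S := if IsMinimalLeftIdeal S I then I else Iᶜ

theorem minimalOrCompl_of_isMinimalLeftIdeal {I : Set S} (h : IsMinimalLeftIdeal S I) :
    minimalOrCompl I = I := by
  rw [minimalOrCompl, if_pos h]

theorem minimalOrCompl_compl {M : Set S} (h : ¬ IsMinimalLeftIdeal S Mᶜ) :
    minimalOrCompl Mᶜ = M := by
  rw [minimalOrCompl, if_neg h, compl_compl]

theorem eq_or_eq_compl_of_minimalOrCompl_eq {I M : Set S} (h : minimalOrCompl I = M) :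
    I = M ∨ I = Mᶜ := by
  unfold minimalOrCompl at h
  split_ifs at h
  · exact .inl h
  · exact .inr (compl_compl I ▸ congrArg compl h)

theorem IsResolvingSet.minimalOrCompl_mem_or
    (hu : ⋃₀ {I : Set S | IsMinimalLeftIdeal S I} = univ)
    (h3 : 2 < {I : Set S | IsMinimalLeftIdeal S I}.encard)
    {R : Set (NontrivialLeftIdeal S)} (hR : IsResolvingSet S R) {M M' : Set S}
    (hM : IsMinimalLeftIdeal S M) (hM' : IsMinimalLeftIdeal S M') (hne : M ≠ M') :
    M ∈ (fun z => minimalOrCompl z.1) '' R ∨ M' ∈ (fun z => minimalOrCompl z.1) '' R := by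
  obtain ⟨C, hC, hCM, hCM'⟩ := exists_mem_ne_ne_of_two_lt_encard h3 M M'
  let x : NontrivialLeftIdeal S := ⟨Mᶜ, hM.isNontrivialLeftIdeal_compl hu hM' hne.symm⟩
  let y : NontrivialLeftIdeal S := ⟨M'ᶜ, hM'.isNontrivialLeftIdeal_compl hu hM hne⟩
  have hxy : x ≠ y := fun h => hne (compl_inj_iff.1 (congrArg Subtype.val h))
  obtain ⟨z, hzR, hz⟩ := hR x y hxy
  rw [idealGraph_dist_ne_dist_iff hu h3 hxy, inter_comm, hM.inter_compl_nonempty_iff z.2.1,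
    inter_comm, hM'.inter_compl_nonempty_iff z.2.1] at hz
  rcases hz with rfl | rfl | hz
  · exact .inl ⟨_, hzR, minimalOrCompl_compl
      (hM.compl_not_isMinimalLeftIdeal hM' hC hne.symm hCM hCM'.symm)⟩
  · exact .inr ⟨_, hzR, minimalOrCompl_compl
      (hM'.compl_not_isMinimalLeftIdeal hM hC hne hCM' hCM.symm)⟩
  · by_cases hzM : z.1 = M
    · exact .inl ⟨z, hzR, hzM ▸ minimalOrCompl_of_isMinimalLeftIdeal (hzM ▸ hM)⟩
    · have hzM' : z.1 = M' := by tauto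
      exact .inr ⟨z, hzR, hzM' ▸ minimalOrCompl_of_isMinimalLeftIdeal (hzM' ▸ hM')⟩

theorem not_isResolvingSet_of_forall_isMinimalLeftIdeal
    (hu : ⋃₀ {I : Set S | IsMinimalLeftIdeal S I} = univ)
    (h4 : 3 < {I : Set S | IsMinimalLeftIdeal S I}.encard)
    {R : Set (NontrivialLeftIdeal S)} {M₀ : Set S} (hM₀ : IsMinimalLeftIdeal S M₀)
    (hR : ∀ z ∈ R, IsMinimalLeftIdeal S z.1 ∧ z.1 ≠ M₀) : ¬ IsResolvingSet S R := by
  have h3 : 2 < {I : Set S | IsMinimalLeftIdeal S I}.encard := lt_trans (by norm_num) h4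
  obtain ⟨J, hJ, hJM₀, -⟩ := exists_mem_ne_ne_of_two_lt_encard h3 M₀ M₀
  obtain ⟨K, hK, hKM₀, hKJ⟩ := exists_mem_ne_ne_of_two_lt_encard h3 M₀ J
  obtain ⟨D, hD, hDM₀, hDJ, hDK⟩ := exists_mem_ne_ne_ne_of_three_lt_encard h4 M₀ J K
  have hJK : IsLeftIdeal S (J ∪ K) := hJ.1.1.union hK.1.1
  have hM₀JK : ¬ M₀ ⊆ J ∪ K := by
    rw [hM₀.subset_union_iff hJ.1.1 hK.1.1, hM₀.subset_iff_eq hJ, hM₀.subset_iff_eq hK]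
    exact fun h => h.elim (hJM₀ ·.symm) (hKM₀ ·.symm)
  let x : NontrivialLeftIdeal S := ⟨J ∪ K, hJ.1.1.isNontrivialLeftIdeal_union hK.1.1 hM₀
    (mt (hM₀.subset_iff_eq hJ).1 hJM₀.symm) (mt (hM₀.subset_iff_eq hK).1 hKM₀.symm)⟩
  let y : NontrivialLeftIdeal S := ⟨J ∪ K ∪ M₀, hJK.isNontrivialLeftIdeal_union hM₀.1.1 hD
    (by rw [hD.subset_union_iff hJ.1.1 hK.1.1, hD.subset_iff_eq hJ, hD.subset_iff_eq hK]; tauto)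
    (mt (hD.subset_iff_eq hM₀).1 hDM₀)⟩
  have hxy : x ≠ y := fun h => hM₀JK <| by
    have hM₀y : M₀ ⊆ y.1 := subset_union_right
    rwa [← h] at hM₀y
  intro hRes
  obtain ⟨w, hwR, hres⟩ := hRes x y hxy
  obtain ⟨hw, hwM₀⟩ := hR w hwR
  -- No minimal `w` contains both `J` and `K`, and `w ⊆ J ∪ K ∪ M₀` forces `w ⊆ J ∪ K`.
  have hJKw : ¬ (J ⊆ w.1 ∧ K ⊆ w.1) := fun ⟨hJw, hKw⟩ =>
    hKJ (((hK.subset_iff_eq hw).1 hKw).trans ((hJ.subset_iff_eq hw).1 hJw).symm)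
  rw [idealGraph_dist_ne_dist_iff hu h3 hxy, hw.inter_nonempty_iff x.2.1,
    hw.inter_nonempty_iff y.2.1, hw.subset_union_iff hJK hM₀.1.1, hw.subset_iff_eq hM₀] at hres
  rcases hres with rfl | rfl | hres
  · exact hJKw ⟨subset_union_left, subset_union_right⟩
  · exact hJKw ⟨subset_union_left.trans subset_union_left,
      subset_union_right.trans subset_union_left⟩
  · tauto

theorem not_isResolvingSet_of_compl_mem (hu : ⋃₀ {I : Set S | IsMinimalLeftIdeal S I} = univ)
    (h4 : 3 < {I : Set S | IsMinimalLeftIdeal S I}.encard)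
    {R : Set (NontrivialLeftIdeal S)} {M₀ : Set S} (hM₀ : IsMinimalLeftIdeal S M₀)
    (hcover : ∀ z ∈ R, IsMinimalLeftIdeal S (minimalOrCompl z.1) ∧ minimalOrCompl z.1 ≠ M₀)
    (hinj : InjOn (fun z : NontrivialLeftIdeal S => minimalOrCompl z.1) R)
    {z : NontrivialLeftIdeal S} (hzR : z ∈ R) (hz : ¬ IsMinimalLeftIdeal S z.1) :
    ¬ IsResolvingSet S R := by
  have h3 : 2 < {I : Set S | IsMinimalLeftIdeal S I}.encard := lt_trans (by norm_num) h4
  obtain ⟨hb, hbM₀⟩ := hcover z hzR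
  set b := minimalOrCompl z.1 with hb_def
  have hzb : z.1 = bᶜ := (eq_or_eq_compl_of_minimalOrCompl_eq hb_def.symm).resolve_left
    fun h => hz (h ▸ hb)
  obtain ⟨C, hC, hCM₀, hCb⟩ := exists_mem_ne_ne_of_two_lt_encard h3 M₀ b
  let x : NontrivialLeftIdeal S := ⟨M₀, hM₀.1⟩
  let y : NontrivialLeftIdeal S := ⟨M₀ ∪ b, hM₀.1.1.isNontrivialLeftIdeal_union hb.1.1 hC
    (mt (hC.subset_iff_eq hM₀).1 hCM₀) (mt (hC.subset_iff_eq hb).1 hCb)⟩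
  have hxy : x ≠ y := fun h => hbM₀ <| (hb.subset_iff_eq hM₀).1 <| by
    have hby : b ⊆ y.1 := subset_union_right
    rwa [← h] at hby
  intro hRes
  obtain ⟨w, hwR, hres⟩ := hRes x y hxy
  obtain ⟨hM, hMM₀⟩ := hcover w hwR
  set M := minimalOrCompl w.1 with hM_def
  have hwx : w ≠ x := by
    rintro rfl
    exact hMM₀ (minimalOrCompl_of_isMinimalLeftIdeal hM₀)
  rw [idealGraph_dist_ne_dist_iff hu h3 hxy, inter_comm, hM₀.inter_nonempty_iff w.2.1] at hres
  rcases eq_or_eq_compl_of_minimalOrCompl_eq hM_def.symm with hwM | hwM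
  · -- Only `w = b` separates `M₀` from `M₀ ∪ b`, but `b` is already the index of `z`.
    rw [hwM, hM.inter_nonempty_iff (hM₀.1.1.union hb.1.1), hM.subset_union_iff hM₀.1.1 hb.1.1,
      hM₀.subset_iff_eq hM, hM.subset_iff_eq hM₀, hM.subset_iff_eq hb] at hres
    have hwy : w ≠ y := fun h => hMM₀ <| Eq.symm <| (hM₀.subset_iff_eq hM).1 <| by
      rw [← hwM, h]
      exact subset_union_left
    have hMb : M = b := by
      rcases hres with h | h | h
      exacts [absurd h hwx, absurd h hwy, by tauto]
    have hwz : w = z := hinj hwR hzR (hMb : minimalOrCompl w.1 = minimalOrCompl z.1)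
    obtain ⟨m, hm⟩ := hb.nonempty
    have hmz : m ∈ z.1 := hwz ▸ hwM ▸ hMb ▸ hm
    exact (hzb ▸ hmz) hm
  · have hM₀w : M₀ ⊆ w.1 := hwM ▸ (hM₀.disjoint hM hMM₀.symm).subset_compl_right
    have hwy : w ≠ y := fun h => by
      obtain ⟨D, hD, hDM₀, hDb, hDM⟩ := exists_mem_ne_ne_ne_of_three_lt_encard h4 M₀ b M
      have hDw : D ⊆ y.1 := h ▸ hwM ▸ (hD.disjoint hM hDM).subset_compl_right
      rw [hD.subset_union_iff hM₀.1.1 hb.1.1, hD.subset_iff_eq hM₀, hD.subset_iff_eq hb] at hDw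
      exact hDw.elim hDM₀ hDb
    rcases hres with h | h | h
    · exact hwx h
    · exact hwy h
    · exact h (iff_of_true hM₀w (hM₀.nonempty.mono (subset_inter subset_union_left hM₀w)))

theorem IsResolvingSet.encard_setOf_isMinimalLeftIdeal_le
    (hu : ⋃₀ {I : Set S | IsMinimalLeftIdeal S I} = univ)
    (h4 : 3 < {I : Set S | IsMinimalLeftIdeal S I}.encard)
    {R : Set (NontrivialLeftIdeal S)} (hR : IsResolvingSet S R) :
    {I : Set S | IsMinimalLeftIdeal S I}.encard ≤ R.encard := by
  have h3 : 2 < {I : Set S | IsMinimalLeftIdeal S I}.encard := lt_trans (by norm_num) h4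
  by_contra! hlt
  obtain ⟨M₀, hM₀, himage, hinj⟩ := exists_image_eq_diff_singleton_of_encard_lt
    (fun M hM M' hM' hne => hR.minimalOrCompl_mem_or hu h3 hM hM' hne) hlt
  have hcover : ∀ z ∈ R, IsMinimalLeftIdeal S (minimalOrCompl z.1) ∧ minimalOrCompl z.1 ≠ M₀ :=
    fun z hz => by
      have h := mem_image_of_mem (fun z : NontrivialLeftIdeal S => minimalOrCompl z.1) hz
      rw [himage] at h
      exact ⟨h.1, h.2⟩
  by_cases hcompl : ∃ z ∈ R, ¬ IsMinimalLeftIdeal S z.1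
  · obtain ⟨z, hzR, hz⟩ := hcompl
    exact not_isResolvingSet_of_compl_mem hu h4 hM₀ hcover hinj hzR hz hR
  · push Not at hcompl
    refine not_isResolvingSet_of_forall_isMinimalLeftIdeal hu h4 hM₀
      (fun z hz => ⟨hcompl z hz, ?_⟩) hR
    simpa only [minimalOrCompl_of_isMinimalLeftIdeal (hcompl z hz)] using (hcover z hz).2

theorem metricDim_eq_of_isResolvingSet {R : Set (NontrivialLeftIdeal S)} {k : ℕ∞}
    (hR : IsResolvingSet S R) (hRk : R.encard = k)
    (hle : ∀ R' : Set (NontrivialLeftIdeal S), IsResolvingSet S R' → k ≤ R'.encard) :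
    metricDim S = k :=
  le_antisymm (sInf_le ⟨R, hR, hRk⟩) (le_sInf fun _ ⟨R', hR', hR'k⟩ => hR'k ▸ hle R' hR')

end

theorem metricDim_eq_general (S : Type*) [Semigroup S] (n : ℕ)
    (hcard : {I : Set S | IsMinimalLeftIdeal S I}.encard = n)
    (hunion : ⋃₀ {I : Set S | IsMinimalLeftIdeal S I} = Set.univ) :
    (n = 3 → metricDim S = 2) ∧ (4 ≤ n → metricDim S = n) := by
  constructor
  · rintro rfl
    have h3 : 2 < {I : Set S | IsMinimalLeftIdeal S I}.encard := by rw [hcard]; norm_num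
    obtain ⟨M₁, M₂, M₃, h₁₂, h₁₃, h₂₃, hmin⟩ := encard_eq_three.1 hcard
    have hM₁ : IsMinimalLeftIdeal S M₁ := show M₁ ∈ {I : Set S | IsMinimalLeftIdeal S I} by
      simp [hmin]
    have hM₂ : IsMinimalLeftIdeal S M₂ := show M₂ ∈ {I : Set S | IsMinimalLeftIdeal S I} by
      simp [hmin]
    exact metricDim_eq_of_isResolvingSet (isResolvingSet_pair hunion hmin h₁₂ h₁₃ h₂₃ hM₁ hM₂)
      (encard_pair fun h => h₁₂ (congrArg Subtype.val h))
      fun R hR => hR.two_le_encard hunion h3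
  · intro h4
    have h4' : 3 < {I : Set S | IsMinimalLeftIdeal S I}.encard := by
      rw [hcard]; exact_mod_cast h4
    exact metricDim_eq_of_isResolvingSet
      (isResolvingSet_setOf_isMinimalLeftIdeal hunion (lt_trans (by norm_num) h4'))
      (encard_setOf_isMinimalLeftIdeal_val.trans hcard)
      fun R hR => hcard ▸ hR.encard_setOf_isMinimalLeftIdeal_le hunion h4'

/-- If `S` is the union of its `n` minimal left ideals (`3 ≤ n < ∞`), then the metric
dimension of `Γ(S)` is `2` when `n = 3` and `n` when `n ≥ 4`. -/
theorem metricDim_eq (S : Type*) [Semigroup S] (n : ℕ) (hn : 3 ≤ n)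
    (hcard : {I : Set S | IsMinimalLeftIdeal S I}.encard = n)
    (hunion : ⋃₀ {I : Set S | IsMinimalLeftIdeal S I} = Set.univ) :
    (n = 3 → metricDim S = 2) ∧ (4 ≤ n → metricDim S = n) :=
  metricDim_eq_general S n hcard hunion
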